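/- Under the standing hypotheses, the transfer map 𝚫₁^W : X → Z is a chain map: 𝚫₁^W∘m₁^{V⊙W} + m₁^V∘𝚫₁^W = 0 as maps X → Z. (Proposition 3.4 of the paper: the transfer map 𝚫₁^W : Cth₊(V₀⊙W₀,V₁⊙W₁) → Cth₊(V₀,V₁) is a chain map.) -/
import Mathlib


/-!
Statement 0 (Legout, Section 3.2.1): the differential
`m₁^{V⊙W} = m₁^{W,+0}∘𝐛₁^V + m₁^{V,0−}∘𝚫₁^W` on the Rabinowitz–Floer complex
`Cth₊(V₀⊙W₀, V₁⊙W₁)` of a transverse pair of concatenated exact Lagrangian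
cobordisms squares to zero.  Algebraic model over `F₂ = ZMod 2`:
`X = P ⊕ Q`, `Y = P ⊕ C`, `Z = C′ ⊕ Q`, `𝔠 = C′ ⊕ C`.
-/

namespace LegoutStmt2

variable {P Q C C' : Type*}
  [AddCommGroup P] [Module (ZMod 2) P]
  [AddCommGroup Q] [Module (ZMod 2) Q]
  [AddCommGroup C] [Module (ZMod 2) C]
  [AddCommGroup C'] [Module (ZMod 2) C']

/-- `𝚫₁^W : X = P ⊕ Q → Z = C′ ⊕ Q`, `p + q ↦ Δ₁^W(p) + q`. -/
def boldDelta1W (Δ1W : P →ₗ[ZMod 2] C') : (P × Q) →ₗ[ZMod 2] C' × Q :=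
  LinearMap.prod (Δ1W ∘ₗ LinearMap.fst (ZMod 2) P Q) (LinearMap.snd (ZMod 2) P Q)

/-- `𝐛₁^V : X → Y = P ⊕ C`, `p + q ↦ p + b₁^V(Δ₁^W(p)) + b₁^V(q)`. -/
def boldB1V (Δ1W : P →ₗ[ZMod 2] C') (b1V : (C' × Q) →ₗ[ZMod 2] C) :
    (P × Q) →ₗ[ZMod 2] P × C :=
  LinearMap.prod (LinearMap.fst (ZMod 2) P Q) (b1V ∘ₗ boldDelta1W Δ1W)

/-- `𝚫₁^{W⊂W} : Y → 𝔠 = C′ ⊕ C`, `p + c ↦ Δ₁^W(p) + c`. -/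
def delta1WW (Δ1W : P →ₗ[ZMod 2] C') : (P × C) →ₗ[ZMod 2] C' × C :=
  LinearMap.prod (Δ1W ∘ₗ LinearMap.fst (ZMod 2) P C) (LinearMap.snd (ZMod 2) P C)

/-- `𝐛₁^{V⊂V} : Z → 𝔠`, `c′ + q ↦ c′ + b₁^V(c′) + b₁^V(q)`. -/
def b1VV (b1V : (C' × Q) →ₗ[ZMod 2] C) : (C' × Q) →ₗ[ZMod 2] C' × C :=
  LinearMap.prod (LinearMap.fst (ZMod 2) C' Q) b1V

/-- `m₁^{V⊙W} := m₁^{W,+0}∘𝐛₁^V + m₁^{V,0−}∘𝚫₁^W : X → X` (via `P ⊆ X`, `Q ⊆ X`). -/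
def m1VoW (mW0 : (P × C) →ₗ[ZMod 2] P) (mV0 : (C' × Q) →ₗ[ZMod 2] Q)
    (Δ1W : P →ₗ[ZMod 2] C') (b1V : (C' × Q) →ₗ[ZMod 2] C) :
    (P × Q) →ₗ[ZMod 2] P × Q :=
  LinearMap.prod (mW0 ∘ₗ boldB1V Δ1W b1V) (mV0 ∘ₗ boldDelta1W Δ1W)

/-- `m₁^𝔠 : 𝔠 → 𝔠`, `c′ + c ↦ Δ₁^Λ(c′) + b₁^Λ(c′ + c)`. -/
def m1frakc (Δ1L : C' →ₗ[ZMod 2] C') (b1L : (C' × C) →ₗ[ZMod 2] C) :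
    (C' × C) →ₗ[ZMod 2] C' × C :=
  LinearMap.prod (Δ1L ∘ₗ LinearMap.fst (ZMod 2) C' C) b1L

/-- Proposition 3.4: the transfer map `𝚫₁^W : Cth₊(V₀⊙W₀,V₁⊙W₁) → Cth₊(V₀,V₁)`
is a chain map: `𝚫₁^W∘m₁^{V⊙W} + m₁^V∘𝚫₁^W = 0`. -/
theorem boldDelta1W_chain_map
    (mW0 : (P × C) →ₗ[ZMod 2] P) (mWm : (P × C) →ₗ[ZMod 2] C)
    (mVp : (C' × Q) →ₗ[ZMod 2] C') (mV0 : (C' × Q) →ₗ[ZMod 2] Q)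
    (Δ1W : P →ₗ[ZMod 2] C') (b1V : (C' × Q) →ₗ[ZMod 2] C)
    (Δ1L : C' →ₗ[ZMod 2] C') (b1L : (C' × C) →ₗ[ZMod 2] C)
    (hD1 : (LinearMap.prod mW0 mWm) ∘ₗ (LinearMap.prod mW0 mWm) = 0)
    (hD2 : (LinearMap.prod mVp mV0) ∘ₗ (LinearMap.prod mVp mV0) = 0)
    (hS1 : mWm = b1L ∘ₗ delta1WW Δ1W)
    (hS2 : mVp = Δ1L ∘ₗ LinearMap.fst (ZMod 2) C' Q)
    (hR1 : Δ1W ∘ₗ mW0 = (Δ1L ∘ₗ Δ1W) ∘ₗ LinearMap.fst (ZMod 2) P C)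
    (hR2 : b1V ∘ₗ (LinearMap.prod mVp mV0) = b1L ∘ₗ b1VV b1V) :
    (boldDelta1W Δ1W) ∘ₗ (m1VoW mW0 mV0 Δ1W b1V)
      + (LinearMap.prod mVp mV0) ∘ₗ (boldDelta1W Δ1W) = 0 := by
  apply LinearMap.ext
  rintro ⟨p, q⟩
  have h1 := LinearMap.congr_fun hR1 (p, b1V (Δ1W p, q))
  simp only [LinearMap.comp_apply, LinearMap.fst_apply] at h1
  ext
  · simp [boldDelta1W, m1VoW, boldB1V, hS2, h1, ← two_smul (ZMod 2)]
    left; decide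
  · simp [boldDelta1W, m1VoW, boldB1V, ← two_smul (ZMod 2)]
    left; decide

end LegoutStmt2
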